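/- Let J be as given; suppose that every edge of the coding graph E_J is non-negative, that E_J contains no non-positive cycles, and that the labeled graph (E_J, E) is left-synchronizing with delay m. Then for every infinite path α ∈ E^∞ there exists a unique infinite path ω in E_J with E(ω) = α, where the E-label of an infinite path in E_J is the infinite word formed by the distinguished first edges e of the second coordinates of the vertices it visits. Moreover, the map α ↦ ω is a sliding block code: there is a map φ from the set of paths of length m+2 in E to the edge set of E_J such that for every α ∈ E^∞ the unique lift ω satisfies ω_i = φ(α_i α_{i+1} ⋯ α_{i+m+1}) for all i ≥ 1. -/

import Mathlib

/-- A finite directed multigraph. -/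
structure FinGraph where
  V : Type
  E : Type
  fintV : Fintype V
  fintE : Fintype E
  src : E → V
  rng : E → V

variable {G : FinGraph}

/-- A finite path in the graph `G`: a source vertex together with a compatible
list of edges (a vertex is a path of length 0). -/
structure FPath (G : FinGraph) where
  source : G.V
  edges : List G.E
  head_src : ∀ e ∈ edges.head?, G.src e = source
  chain : edges.Chain' fun e f => G.rng e = G.src f

/-- The range (terminal vertex) of a finite path. -/
def FPath.range (p : FPath G) : G.V :=
  p.edges.getLast?.elim p.source G.rng

/-- The length-0 path at a vertex. -/
def FPath.nil (G : FinGraph) (v : G.V) : FPath G :=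
  ⟨v, [], by simp, List.isChain_nil⟩

/-- `p.Prefix q` : the path `p` is an initial segment of the path `q`. -/
def FPath.Prefix (p q : FPath G) : Prop :=
  p.source = q.source ∧ p.edges <+: q.edges

/-- The path obtained by removing the first edge (the tail `κ` of `ν = eκ`). -/
def FPath.tail (p : FPath G) : FPath G where
  source := p.edges.head?.elim p.source G.rng
  edges := p.edges.tail
  head_src := by
    cases hp : p.edges with
    | nil => simp
    | cons a l =>
      have h := p.chain
      rw [hp] at h
      replace h := List.isChain_cons.mp h
      intro e he
      simp only [hp, List.head?_cons, Option.elim, List.tail_cons] at he ⊢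
      exact (h.1 e he).symm
  chain := p.chain.tail

/-- An infinite path in the graph `G`. -/
structure IPath (G : FinGraph) where
  edges : ℕ → G.E
  chain : ∀ i, G.rng (edges i) = G.src (edges (i + 1))

/-- The source vertex of an infinite path. -/
def IPath.source (p : IPath G) : G.V := G.src (p.edges 0)

/-- The cylinder set `Z(p)` of a finite path `p`: all infinite paths with prefix `p`. -/
def cylinder (p : FPath G) : Set (IPath G) :=
  {q | q.source = p.source ∧ ∀ i, (h : i < p.edges.length) → q.edges i = p.edges.get ⟨i, h⟩}

/-- A finite collection `S` of finite paths is a partition of the path `ν`: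
the cylinder sets are pairwise disjoint with union `Z(ν)`. -/
def IsPartitionOfPath (S : Set (FPath G)) (ν : FPath G) : Prop :=
  S.Finite ∧ (∀ p ∈ S, ∀ q ∈ S, p ≠ q → cylinder p ∩ cylinder q = ∅) ∧
    (⋃ p ∈ S, cylinder p) = cylinder ν

/-- A finite collection `S` of finite paths is a partition of the vertex `v`. -/
def IsPartitionOf (S : Set (FPath G)) (v : G.V) : Prop :=
  IsPartitionOfPath S (FPath.nil G v)

/-- Standing assumptions: no sinks, no sources, every cycle has an exit. -/
structure Standing (G : FinGraph) : Prop where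
  no_sinks : ∀ v : G.V, ∃ e, G.src e = v
  no_sources : ∀ v : G.V, ∃ e, G.rng e = v
  cycles_exit : ∀ p : FPath G, p.edges ≠ [] → p.range = p.source →
    ∃ e ∈ p.edges, ∃ f, f ≠ e ∧ G.src f = G.src e

/-- The combinatorial conditions making `u_J = Σ_{(μ,ν) ∈ J} S_μ S_ν^*` a unitary:
`J` is finite, `s(μ) = s(ν)`, `r(μ) = r(ν)`, `|ν| ≥ 1` for all `(μ,ν) ∈ J`, and both
families of cylinder sets are pairwise disjoint with union all of `E^∞`. -/
structure IsUnitaryJ (G : FinGraph) (J : Set (FPath G × FPath G)) : Prop where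
  finite : J.Finite
  src_eq : ∀ p ∈ J, (Prod.fst p).source = (Prod.snd p).source
  rng_eq : ∀ p ∈ J, FPath.range (Prod.fst p) = FPath.range (Prod.snd p)
  ne_nil : ∀ p ∈ J, (Prod.snd p).edges ≠ []
  disj₁ : ∀ p ∈ J, ∀ q ∈ J, p ≠ q → cylinder (Prod.fst p) ∩ cylinder (Prod.fst q) = ∅
  union₁ : (⋃ p ∈ J, cylinder (Prod.fst p)) = Set.univ
  disj₂ : ∀ p ∈ J, ∀ q ∈ J, p ≠ q → cylinder (Prod.snd p) ∩ cylinder (Prod.snd q) = ∅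
  union₂ : (⋃ p ∈ J, cylinder (Prod.snd p)) = Set.univ

/-- Adjacency in the coding graph `E_J`: there is an edge from `p = (μ₁, e₁ν₁)` to
`q = (μ₂, e₂ν₂)` iff the tail `ν₁` and `μ₂` are prefix-comparable
(the combinatorial content of `S_{ν₁}^* S_{μ₂} ≠ 0`). -/
def CGAdj (p q : FPath G × FPath G) : Prop :=
  FPath.Prefix p.2.tail q.1 ∨ FPath.Prefix q.1 p.2.tail

/-- The degree `|μ₂| − |ν₁|` of the coding-graph edge from `p` to `q`. -/
def cgDeg (p q : FPath G × FPath G) : ℤ :=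
  (q.1.edges.length : ℤ) - (p.2.tail.edges.length : ℤ)

/-- `IsAppend p q r` : the path `r` is the concatenation `p q`. -/
def IsAppend (p q r : FPath G) : Prop :=
  r.source = p.source ∧ q.source = p.range ∧ r.edges = p.edges ++ q.edges

/-- A finite path in the coding graph `E_J`, recorded by the (nonempty) list of
vertices of `J` it visits (a single vertex is a path of length 0). -/
structure CGPath (G : FinGraph) (J : Set (FPath G × FPath G)) where
  verts : List (FPath G × FPath G)
  ne : verts ≠ []
  mem : ∀ v ∈ verts, v ∈ J
  adj : verts.Chain' CGAdj

/-- The `E`-label of a path in the coding graph: the list of distinguished first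
edges `e` of the second coordinates of the vertices it visits. -/
def CGPath.elabel {J : Set (FPath G × FPath G)} (ω : CGPath G J) : List G.E :=
  ω.verts.filterMap fun v => v.2.edges.head?

/-- `IsLabelOf l γ` : `γ` is the `L_J`-label of the coding-graph path visiting the
vertices in the list `l` (all of whose edges are non-negative): the concatenation of
the `L_J`-labels of its edges, and the empty path at `r(μ)` for the length-0 path
at a vertex `(μ, eν)`. -/
inductive IsLabelOf : List (FPath G × FPath G) → FPath G → Prop
  | single (p : FPath G × FPath G) (γ : FPath G) :
      γ.edges = [] → γ.source = FPath.range p.1 → IsLabelOf [p] γ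
  | cons (p q : FPath G × FPath G) (rest : List (FPath G × FPath G)) (α γ δ : FPath G) :
      IsAppend p.2.tail α q.1 → IsLabelOf (q :: rest) γ → IsAppend α γ δ →
      IsLabelOf (p :: q :: rest) δ

/-- Every edge of the coding graph `E_J` is non-negative. -/
def AllEdgesNonneg (G : FinGraph) (J : Set (FPath G × FPath G)) : Prop :=
  ∀ p ∈ J, ∀ q ∈ J, CGAdj p q → 0 ≤ cgDeg p q

/-- The coding graph `E_J` contains a non-positive cycle. -/
def HasNonposCycle (G : FinGraph) (J : Set (FPath G × FPath G)) : Prop :=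
  ∃ ω : CGPath G J, 2 ≤ ω.verts.length ∧ ω.verts.getLast ω.ne = ω.verts.head ω.ne ∧
    ω.verts.Chain' fun p q => cgDeg p q ≤ 0

/-- All outgoing edges of the vertex `p` in the coding graph `E_J` are positive. -/
def AllOutPositive (G : FinGraph) (J : Set (FPath G × FPath G))
    (p : FPath G × FPath G) : Prop :=
  ∀ q ∈ J, CGAdj p q → 0 < cgDeg p q

/-- `IsSnoc p f q` : the path `q` is `p` extended by the single edge `f`. -/
def IsSnoc (p : FPath G) (f : G.E) (q : FPath G) : Prop :=
  q.source = p.source ∧ q.edges = p.edges ++ [f]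

/-- `IsSplitting G J p J'` : `J'` is the splitting of `J` at the vertex `p = (μ, eν)`,
i.e. `J' = (J ∖ {(μ,eν)}) ∪ {(μf, eνf) : f ∈ E¹, s(f) = r(μ)}`. -/
def IsSplitting (G : FinGraph) (J : Set (FPath G × FPath G)) (p : FPath G × FPath G)
    (J' : Set (FPath G × FPath G)) : Prop :=
  p ∈ J ∧ ∀ q, q ∈ J' ↔ (q ∈ J ∧ q ≠ p) ∨
    ∃ f, G.src f = FPath.range p.1 ∧ IsSnoc p.1 f q.1 ∧ IsSnoc p.2 f q.2

/-- The set of negative edges of the coding graph `E_J`. -/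
def negEdgeSet (G : FinGraph) (J : Set (FPath G × FPath G)) :
    Set ((FPath G × FPath G) × (FPath G × FPath G)) :=
  {e | e.1 ∈ J ∧ e.2 ∈ J ∧ CGAdj e.1 e.2 ∧ cgDeg e.1 e.2 < 0}

/-- `IsFinalNeg G J p q ω d` : the edge from `p` to `q` in `E_J` is a final negative
edge with destination `d`, via the zero path `ω` from `q` to `d`; the height of the
edge is `ω.verts.length - 1`. -/
def IsFinalNeg (G : FinGraph) (J : Set (FPath G × FPath G))
    (p q : FPath G × FPath G) (ω : CGPath G J) (d : FPath G × FPath G) : Prop :=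
  p ∈ J ∧ q ∈ J ∧ CGAdj p q ∧ cgDeg p q < 0 ∧
    ω.verts.head ω.ne = q ∧ ω.verts.getLast ω.ne = d ∧
    (ω.verts.Chain' fun a b => cgDeg a b = 0) ∧ AllOutPositive G J d

/-- `(E_J, E)` is left-synchronizing with delay `m` : any two paths of length `m`
(i.e. with `m+1` vertices) in `E_J` with the same `E`-label have the same source. -/
def LeftSyncDelay (G : FinGraph) (J : Set (FPath G × FPath G)) (m : ℕ) : Prop :=
  ∀ ω ξ : CGPath G J, ω.verts.length = m + 1 → ξ.verts.length = m + 1 →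
    ω.elabel = ξ.elabel → ω.verts.head ω.ne = ξ.verts.head ξ.ne

/-- An infinite path in the coding graph `E_J`. -/
structure CGIPath (G : FinGraph) (J : Set (FPath G × FPath G)) where
  verts : ℕ → FPath G × FPath G
  mem : ∀ i, verts i ∈ J
  adj : ∀ i, CGAdj (verts i) (verts (i + 1))

/-- The infinite `E`-label of an infinite coding-graph path is the infinite path `α`. -/
def ELabelInf {J : Set (FPath G × FPath G)} (ω : CGIPath G J) (α : IPath G) : Prop :=
  ∀ i, (ω.verts i).2.edges.head? = some (α.edges i)

/-- A transducer with input alphabet `A`, output alphabet `B`, a finite state set,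
an initial state and a transition function. -/
structure Transducer (A B : Type) where
  S : Type
  finS : Finite S
  init : S
  tr : S → A → S × List B

/-- The state sequence of a transducer on an infinite input word. -/
def Transducer.states {A B : Type} (T : Transducer A B) (α : ℕ → A) : ℕ → T.S
  | 0 => T.init
  | n + 1 => (T.tr (T.states α n) (α n)).1

/-- The `n`-th output block of a transducer on an infinite input word. -/
def Transducer.outBlock {A B : Type} (T : Transducer A B) (α : ℕ → A) (n : ℕ) : List B :=
  (T.tr (T.states α n) (α n)).2

/-- The concatenation of the first `n` blocks of a sequence of finite words. -/
def joinUpTo {X : Type} (f : ℕ → List X) (n : ℕ) : List X :=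
  ((List.range n).map f).flatten

/-- Two infinite concatenations of sequences of finite words are equal. -/
def StreamsEq {X : Type} (f g : ℕ → List X) : Prop :=
  (∀ n, ∃ m, joinUpTo f n <+: joinUpTo g m) ∧ ∀ n, ∃ m, joinUpTo g n <+: joinUpTo f m

/-- The type of edges of the coding graph `E_J`. -/
def CGEdgeT (G : FinGraph) (J : Set (FPath G × FPath G)) : Type :=
  {e : (FPath G × FPath G) × (FPath G × FPath G) // e.1 ∈ J ∧ e.2 ∈ J ∧ CGAdj e.1 e.2}

/-- The sequence of edges of an infinite coding-graph path. -/
def CGIPath.edgeSeq {J : Set (FPath G × FPath G)} (ω : CGIPath G J) (i : ℕ) : CGEdgeT G J :=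
  ⟨(ω.verts i, ω.verts (i + 1)), ω.mem i, ω.mem (i + 1), ω.adj i⟩

/-!
Since the cylinders `Z(eκ)` of the second coordinates cover `E^∞` and every cylinder
`Z(μ)` is nonempty, each vertex `q = (μ, fκ')` of `E_J` has, for every edge `e` with
`r(e) = s(f)`, an in-neighbour `(μ', eκ)`: pick `x ∈ Z(μ)` and the vertex whose
cylinder contains `ex`; then `κ` and `μ` are both prefixes of `x`, hence comparable.
So every finite segment of `α` lifts to a path in `E_J`, and by left-synchronization
the first vertex of any lift of `α_j ⋯ α_{j+m}` depends only on that segment. These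
first vertices form the lift of `α`, force its uniqueness, and show that the edge of
the lift at position `i` is a function of `α_i ⋯ α_{i+m+1}`.
-/

namespace IPath

def cons (e : G.E) (x : IPath G) (h : G.rng e = x.source) : IPath G where
  edges := fun
    | 0 => e
    | n + 1 => x.edges n
  chain := fun
    | 0 => h
    | n + 1 => x.chain n

end IPath

lemma exists_iPath_source_eq (hsink : ∀ v : G.V, ∃ e, G.src e = v) (v : G.V) :
    ∃ x : IPath G, x.source = v := by
  choose next hnext using hsink
  let f : G.V → G.V := G.rng ∘ next
  refine ⟨⟨fun n => next (f^[n] v), fun i => ?_⟩, hnext v⟩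
  rw [hnext, Function.iterate_succ_apply']
  rfl

lemma mem_cylinder_iff {x : IPath G} {ν : FPath G} :
    x ∈ cylinder ν ↔ x.source = ν.source ∧ ∀ i (h : i < ν.edges.length), x.edges i = ν.edges[i] :=
  Iff.rfl

lemma cons_mem_cylinder_iff {e : G.E} {x : IPath G} {h : G.rng e = x.source} {ν : FPath G}
    (hν : ν.edges ≠ []) :
    x.cons e h ∈ cylinder ν ↔ ν.edges.head? = some e ∧ x ∈ cylinder ν.tail := by
  obtain ⟨v, _ | ⟨a, l⟩, hs, hc⟩ := ν
  · exact absurd rfl hν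
  simp only [mem_cylinder_iff, FPath.tail, List.head?_cons, Option.elim, List.tail_cons,
    List.length_cons, Option.some.injEq]
  constructor
  · rintro ⟨-, hx⟩
    obtain rfl : a = e := (hx 0 (by simp)).symm
    exact ⟨rfl, h.symm, fun i hi => hx (i + 1) (by omega)⟩
  · rintro ⟨rfl, -, hx⟩
    refine ⟨hs a rfl, fun i hi => ?_⟩
    cases i with
    | zero => rfl
    | succ i => exact hx i (by omega)

lemma cylinder_nonempty (hsink : ∀ v : G.V, ∃ e, G.src e = v) (ν : FPath G) :
    (cylinder ν).Nonempty := by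
  induction hn : ν.edges.length generalizing ν with
  | zero =>
    obtain ⟨x, hx⟩ := exists_iPath_source_eq hsink ν.source
    exact ⟨x, hx, fun i hi => by omega⟩
  | succ n ih =>
    obtain ⟨e, l, hel⟩ := List.exists_cons_of_length_eq_add_one hn
    obtain ⟨x, hx⟩ := ih ν.tail (by simpa [FPath.tail, hel] using hn)
    have hsrc : G.rng e = x.source := by rw [hx.1]; simp [FPath.tail, hel]
    exact ⟨x.cons e hsrc, (cons_mem_cylinder_iff (by simp [hel])).2 ⟨by simp [hel], hx⟩⟩

lemma FPath.prefix_of_mem_cylinder {ρ τ : FPath G} {x : IPath G} (hρ : x ∈ cylinder ρ)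
    (hτ : x ∈ cylinder τ) (hlen : ρ.edges.length ≤ τ.edges.length) : ρ.Prefix τ := by
  refine ⟨hρ.1.symm.trans hτ.1, ?_⟩
  rw [List.prefix_iff_eq_take]
  refine List.ext_getElem (by simp [hlen]) fun i h₁ h₂ => ?_
  rw [List.getElem_take, ← (mem_cylinder_iff.1 hρ).2 i h₁, (mem_cylinder_iff.1 hτ).2]

lemma cgAdj_of_mem_cylinder {p q : FPath G × FPath G} {x : IPath G}
    (hp : x ∈ cylinder p.2.tail) (hq : x ∈ cylinder q.1) : CGAdj p q :=
  (le_total p.2.tail.edges.length q.1.edges.length).imp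
    (FPath.prefix_of_mem_cylinder hp hq) (FPath.prefix_of_mem_cylinder hq hp)

section Lift

variable {J : Set (FPath G × FPath G)}

lemma IsUnitaryJ.exists_head_eq_mem_cylinder_tail (hJ : IsUnitaryJ G J) (e : G.E) {x : IPath G}
    (hx : G.rng e = x.source) :
    ∃ p ∈ J, p.2.edges.head? = some e ∧ x ∈ cylinder p.2.tail := by
  have hmem : x.cons e hx ∈ ⋃ p ∈ J, cylinder p.2 := hJ.union₂ ▸ Set.mem_univ _
  obtain ⟨p, hpJ, hp⟩ := Set.mem_iUnion₂.1 hmem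
  exact ⟨p, hpJ, (cons_mem_cylinder_iff (hJ.ne_nil p hpJ)).1 hp⟩

/-- `v 0, …, v n` is a path in `E_J` with `E`-label `lab 0, …, lab n`. -/
structure IsLabelledWalk (J : Set (FPath G × FPath G)) (lab : ℕ → G.E) (n : ℕ)
    (v : ℕ → FPath G × FPath G) : Prop where
  mem : ∀ t ≤ n, v t ∈ J
  head_eq : ∀ t ≤ n, (v t).2.edges.head? = some (lab t)
  adj : ∀ t < n, CGAdj (v t) (v (t + 1))

namespace IsLabelledWalk

variable {lab : ℕ → G.E} {n : ℕ} {v : ℕ → FPath G × FPath G}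

lemma mono (h : IsLabelledWalk J lab n v) {n' : ℕ} (hn : n' ≤ n) : IsLabelledWalk J lab n' v :=
  ⟨fun t ht => h.mem t (by omega), fun t ht => h.head_eq t (by omega),
    fun t ht => h.adj t (by omega)⟩

lemma drop (h : IsLabelledWalk J lab n v) (k : ℕ) {n' : ℕ} (hk : k + n' ≤ n) :
    IsLabelledWalk J (fun t => lab (k + t)) n' (fun t => v (k + t)) :=
  ⟨fun t ht => h.mem _ (by omega), fun t ht => h.head_eq _ (by omega),
    fun t ht => h.adj _ (by omega)⟩

def toCGPath (h : IsLabelledWalk J lab n v) : CGPath G J where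
  verts := List.ofFn fun t : Fin (n + 1) => v t
  ne := by simp
  mem := by
    simp only [List.mem_ofFn, forall_exists_index]
    rintro _ t rfl
    exact h.mem t (by omega)
  adj := List.isChain_iff_getElem.2 fun t ht => by
    rw [List.length_ofFn] at ht
    simpa only [List.getElem_ofFn] using h.adj t (by omega)

lemma toCGPath_length (h : IsLabelledWalk J lab n v) : h.toCGPath.verts.length = n + 1 := by
  simp [toCGPath]

lemma toCGPath_head (h : IsLabelledWalk J lab n v) :
    h.toCGPath.verts.head h.toCGPath.ne = v 0 := by
  simp [toCGPath]

lemma toCGPath_elabel (h : IsLabelledWalk J lab n v) :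
    h.toCGPath.elabel = List.ofFn fun t : Fin (n + 1) => lab t := by
  change (List.ofFn fun t : Fin (n + 1) => v t).filterMap _ = _
  rw [List.ofFn_eq_map, List.ofFn_eq_map, List.filterMap_map,
    List.filterMap_eq_map_iff_forall_eq_some]
  exact fun t _ => h.head_eq t (by omega)

end IsLabelledWalk

lemma LeftSyncDelay.eq_of_isLabelledWalk {m : ℕ} (hsync : LeftSyncDelay G J m)
    {lab lab' : ℕ → G.E} {v w : ℕ → FPath G × FPath G} (hv : IsLabelledWalk J lab m v)
    (hw : IsLabelledWalk J lab' m w) (hlab : ∀ t ≤ m, lab t = lab' t) : v 0 = w 0 := by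
  have h := hsync hv.toCGPath hw.toCGPath hv.toCGPath_length hw.toCGPath_length
    (by simp only [hv.toCGPath_elabel, hw.toCGPath_elabel, fun t : Fin (m + 1) => hlab t (by omega)])
  rwa [hv.toCGPath_head, hw.toCGPath_head] at h


lemma IsUnitaryJ.exists_adj_head_eq (hsink : ∀ v : G.V, ∃ e, G.src e = v)
    (hJ : IsUnitaryJ G J) {q : FPath G × FPath G} (hq : q ∈ J) {f : G.E}
    (hf : q.2.edges.head? = some f) (e : G.E) (he : G.rng e = G.src f) :
    ∃ p ∈ J, p.2.edges.head? = some e ∧ CGAdj p q := by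
  obtain ⟨x, hx⟩ := cylinder_nonempty hsink q.1
  have hsrc : G.rng e = x.source := by
    rw [he, hx.1, hJ.src_eq q hq, q.2.head_src f (by simp [hf])]
  obtain ⟨p, hpJ, hp, hpx⟩ := hJ.exists_head_eq_mem_cylinder_tail e hsrc
  exact ⟨p, hpJ, hp, cgAdj_of_mem_cylinder hpx hx⟩

lemma IsUnitaryJ.exists_isLabelledWalk (hsink : ∀ v : G.V, ∃ e, G.src e = v)
    (hJ : IsUnitaryJ G J) (α : IPath G) (n j : ℕ) :
    ∃ v, IsLabelledWalk J (fun t => α.edges (j + t)) n v := by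
  induction n generalizing j with
  | zero =>
    obtain ⟨x, hx⟩ := exists_iPath_source_eq hsink (G.rng (α.edges j))
    obtain ⟨p, hpJ, hp, -⟩ := hJ.exists_head_eq_mem_cylinder_tail (α.edges j) hx.symm
    refine ⟨fun _ => p, fun _ _ => hpJ, fun t ht => ?_, fun t ht => absurd ht t.not_lt_zero⟩
    rwa [Nat.le_zero.1 ht]
  | succ n ih =>
    obtain ⟨w, hw⟩ := ih (j + 1)
    obtain ⟨p, hpJ, hp, hpw⟩ := hJ.exists_adj_head_eq hsink (hw.mem 0 (Nat.zero_le n))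
      (hw.head_eq 0 (Nat.zero_le n)) (α.edges j) (α.chain j)
    refine ⟨fun | 0 => p | t + 1 => w t, fun t ht => ?_, fun t ht => ?_, fun t ht => ?_⟩
    · cases t with
      | zero => exact hpJ
      | succ t => exact hw.mem t (by omega)
    · cases t with
      | zero => exact hp
      | succ t =>
        rw [show j + (t + 1) = j + 1 + t by omega]
        exact hw.head_eq t (by omega)
    · cases t with
      | zero => exact hpw
      | succ t => exact hw.adj t (by omega)

lemma ELabelInf.isLabelledWalk {ω : CGIPath G J} {α : IPath G} (hω : ELabelInf ω α) (i n : ℕ) :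
    IsLabelledWalk J (fun t => α.edges (i + t)) n (fun t => ω.verts (i + t)) :=
  ⟨fun t _ => ω.mem (i + t), fun t _ => hω (i + t), fun t _ => ω.adj (i + t)⟩

lemma CGIPath.ext {ω ξ : CGIPath G J} (h : ∀ i, ω.verts i = ξ.verts i) : ω = ξ := by
  obtain ⟨v, _, _⟩ := ω
  obtain ⟨w, _, _⟩ := ξ
  obtain rfl : v = w := funext h
  rfl

variable {m : ℕ}

lemma LeftSyncDelay.verts_eq_of_window (hsync : LeftSyncDelay G J m) {ω ω' : CGIPath G J}
    {α α' : IPath G} (hω : ELabelInf ω α) (hω' : ELabelInf ω' α') {i i' : ℕ}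
    (h : ∀ t ≤ m, α.edges (i + t) = α'.edges (i' + t)) : ω.verts i = ω'.verts i' :=
  hsync.eq_of_isLabelledWalk (hω.isLabelledWalk i m) (hω'.isLabelledWalk i' m) h

lemma LeftSyncDelay.existsUnique_lift (hsync : LeftSyncDelay G J m)
    (hsink : ∀ v : G.V, ∃ e, G.src e = v) (hJ : IsUnitaryJ G J) (α : IPath G) :
    ∃! ω : CGIPath G J, ELabelInf ω α := by
  choose W hW using hJ.exists_isLabelledWalk hsink α m
  have hadj (j : ℕ) : CGAdj (W j 0) (W (j + 1) 0) := by
    obtain ⟨v, hv⟩ := hJ.exists_isLabelledWalk hsink α (m + 1) j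
    have h₀ : v 0 = W j 0 :=
      hsync.eq_of_isLabelledWalk (hv.mono (Nat.le_succ m)) (hW j) fun _ _ => rfl
    have h₁ : v 1 = W (j + 1) 0 :=
      hsync.eq_of_isLabelledWalk (hv.drop 1 (n' := m) (by omega)) (hW (j + 1)) fun t _ => by
        simp only [Nat.add_assoc]
    exact h₀ ▸ h₁ ▸ hv.adj 0 (by omega)
  refine ⟨⟨fun j => W j 0, fun j => (hW j).mem 0 (Nat.zero_le m), hadj⟩,
    fun j => (hW j).head_eq 0 (Nat.zero_le m), fun ξ hξ => CGIPath.ext fun j => ?_⟩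
  exact hsync.eq_of_isLabelledWalk (hξ.isLabelledWalk j m) (hW j) fun _ _ => rfl

lemma LeftSyncDelay.exists_slidingBlockCode (hsync : LeftSyncDelay G J m) :
    ∃ φ : FPath G → (FPath G × FPath G) × (FPath G × FPath G),
      ∀ (α : IPath G) (ω : CGIPath G J), ELabelInf ω α →
        ∀ (i : ℕ) (p : FPath G), p.source = G.src (α.edges i) →
          p.edges = List.ofFn (fun j : Fin (m + 2) => α.edges (i + (j : ℕ))) →
          φ p = (ω.verts i, ω.verts (i + 1)) := by
  classical
  let Realizes (p : FPath G) (z : (FPath G × FPath G) × (FPath G × FPath G)) : Prop :=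
    ∃ (β : IPath G) (ξ : CGIPath G J) (k : ℕ), ELabelInf ξ β ∧
      p.edges = List.ofFn (fun j : Fin (m + 2) => β.edges (k + (j : ℕ))) ∧
      z = (ξ.verts k, ξ.verts (k + 1))
  refine ⟨fun p => if h : ∃ z, Realizes p z then h.choose else ((p, p), (p, p)),
    fun α ω hω i p _ hp => ?_⟩
  have hex : ∃ z, Realizes p z := ⟨_, α, ω, i, hω, hp, rfl⟩
  obtain ⟨β, ξ, k, hξ, hpβ, hz⟩ := hex.choose_spec
  have hwin (t : ℕ) (ht : t ≤ m + 1) : α.edges (i + t) = β.edges (k + t) := by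
    simpa using congrFun (List.ofFn_inj.1 (hp.symm.trans hpβ)) ⟨t, by omega⟩
  dsimp only
  rw [dif_pos hex, hz, hsync.verts_eq_of_window hω hξ fun t ht => hwin t (by omega),
    hsync.verts_eq_of_window hω hξ fun t ht => ?_]
  rw [Nat.add_right_comm i, Nat.add_right_comm k]
  exact hwin (t + 1) (by omega)

end Lift

theorem unique_lift_sliding_block_general (G : FinGraph) (hG : Standing G)
    (J : Set (FPath G × FPath G)) (hJ : IsUnitaryJ G J)
    (m : ℕ) (hsync : LeftSyncDelay G J m) :
    (∀ α : IPath G, ∃! ω : CGIPath G J, ELabelInf ω α) ∧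
    ∃ φ : FPath G → (FPath G × FPath G) × (FPath G × FPath G),
      ∀ (α : IPath G) (ω : CGIPath G J), ELabelInf ω α →
        ∀ (i : ℕ) (p : FPath G), p.source = G.src (α.edges i) →
          p.edges = List.ofFn (fun j : Fin (m + 2) => α.edges (i + (j : ℕ))) →
          φ p = (ω.verts i, ω.verts (i + 1)) :=
  ⟨hsync.existsUnique_lift hG.no_sinks hJ, hsync.exists_slidingBlockCode⟩

/-- Lemma 6.4: if all edges of `E_J` are non-negative, `E_J` has no
non-positive cycles, and `(E_J, E)` is left-synchronizing with delay `m`, then every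
infinite path `α ∈ E^∞` has a unique lift `ω ∈ E_J^∞` with `E(ω) = α`; moreover the
map `α ↦ ω` is a sliding block code: there is `φ` from paths of length `m+2` in `E` to
edges of `E_J` with `ω_i = φ(α_i α_{i+1} ⋯ α_{i+m+1})` for all `i`. -/
theorem unique_lift_sliding_block (G : FinGraph) (hG : Standing G)
    (J : Set (FPath G × FPath G)) (hJ : IsUnitaryJ G J)
    (hnn : AllEdgesNonneg G J) (hnc : ¬ HasNonposCycle G J)
    (m : ℕ) (hsync : LeftSyncDelay G J m) :
    (∀ α : IPath G, ∃! ω : CGIPath G J, ELabelInf ω α) ∧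
    ∃ φ : FPath G → (FPath G × FPath G) × (FPath G × FPath G),
      ∀ (α : IPath G) (ω : CGIPath G J), ELabelInf ω α →
        ∀ (i : ℕ) (p : FPath G), p.source = G.src (α.edges i) →
          p.edges = List.ofFn (fun j : Fin (m + 2) => α.edges (i + (j : ℕ))) →
          φ p = (ω.verts i, ω.verts (i + 1)) :=
  unique_lift_sliding_block_general G hG J hJ m hsync
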